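/- arXiv:2205.11736 — 2 statements merged into one kernel-verified Lean document; each statement's English description precedes it below -/
import Mathlib

section
/- Davis–Kahan sin-θ consequence: Let M be a d×d symmetric matrix with top unit eigenvector v and top eigenvalue μ, let u be a unit vector and β > 0, and suppose ‖M − λI − β u uᵀ‖ ≤ ε for some λ ∈ ℝ with β − ε > ε. Then 1 − (vᵀu)² ≤ 8ε²/(β − ε)², i.e. sin²(v, u) ≤ 8ε²/(β−ε)². -/
open Matrix
noncomputable def specNorm {d : ℕ} (A : Matrix (Fin d) (Fin d) ℝ) : ℝ :=
  ‖Matrix.toEuclideanCLM (𝕜 := ℝ) A‖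
noncomputable def frobNorm {d : ℕ} (A : Matrix (Fin d) (Fin d) ℝ) : ℝ :=
  Real.sqrt (∑ i, ∑ j, (A i j) ^ 2)
noncomputable def vnorm {d : ℕ} (x : Fin d → ℝ) : ℝ := Real.sqrt (x ⬝ᵥ x)

open scoped RealInnerProductSpace

lemma dk_symm_dot {d : ℕ} (M : Matrix (Fin d) (Fin d) ℝ) (hM : M.IsSymm) (x y : Fin d → ℝ) :
    (M *ᵥ x) ⬝ᵥ y = x ⬝ᵥ (M *ᵥ y) := by
  rw [dotProduct_mulVec, ← mulVec_transpose, hM.eq, dotProduct_comm]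

lemma dk_inner_dot {d : ℕ} (x y : EuclideanSpace ℝ (Fin d)) :
    ⟪x, y⟫ = (WithLp.equiv 2 (Fin d → ℝ) x) ⬝ᵥ (WithLp.equiv 2 (Fin d → ℝ) y) := by
  simp [PiLp.inner_apply, dotProduct, mul_comm]

lemma dk_dot_self_nonneg {d : ℕ} (x : Fin d → ℝ) : 0 ≤ x ⬝ᵥ x :=
  Finset.sum_nonneg fun i _ => mul_self_nonneg _

lemma dk_cs {d : ℕ} (x y : Fin d → ℝ) : (x ⬝ᵥ y) ^ 2 ≤ (x ⬝ᵥ x) * (y ⬝ᵥ y) := by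
  simpa [dotProduct, sq, Finset.sum_mul_sq_le_sq_mul_sq] using
    (by simpa [sq] using Finset.sum_mul_sq_le_sq_mul_sq Finset.univ x y :
      (∑ i, x i * y i) ^ 2 ≤ (∑ i, x i * x i) * ∑ i, y i * y i)

lemma dk_rayleigh_le {d : ℕ} (M : Matrix (Fin d) (Fin d) ℝ) (hM : M.IsSymm) (μ : ℝ)
    (htop : ∀ (w : Fin d → ℝ) (ν : ℝ), w ≠ 0 → M *ᵥ w = ν • w → ν ≤ μ)
    (u : Fin d → ℝ) (hu : u ⬝ᵥ u = 1) : u ⬝ᵥ (M *ᵥ u) ≤ μ := by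
  have hH : M.IsHermitian := hM
  set b := hH.eigenvectorBasis with hb
  have hne : ∀ j, ⇑(b j) ≠ (0 : Fin d → ℝ) := by
    intro j h
    exact b.orthonormal.ne_zero j (by ext i; exact congrFun h i)
  have hle : ∀ j, hH.eigenvalues j ≤ μ := fun j =>
    htop _ _ (hne j) (hH.mulVec_eigenvectorBasis j)
  set u' : EuclideanSpace ℝ (Fin d) := (WithLp.equiv 2 (Fin d → ℝ)).symm u with hu'
  have hbj : ∀ j, (WithLp.equiv 2 (Fin d → ℝ)) (b j) = ⇑(b j) := fun _ => rfl
  have h1 : ∀ j, ⟪u', b j⟫ * ⟪b j, u'⟫ = (⇑(b j) ⬝ᵥ u) ^ 2 := by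
    intro j
    rw [dk_inner_dot, dk_inner_dot, hbj]
    simp [u', dotProduct_comm u, sq]
  have hsum1 : ∑ j, (⇑(b j) ⬝ᵥ u) ^ 2 = 1 := by
    rw [← Finset.sum_congr rfl (fun j _ => h1 j), b.sum_inner_mul_inner u' u', dk_inner_dot]
    simpa [u'] using hu
  have h2 : ∀ j, ⟪u', b j⟫ * ⟪b j, (WithLp.equiv 2 (Fin d → ℝ)).symm (M *ᵥ u)⟫
      = hH.eigenvalues j * (⇑(b j) ⬝ᵥ u) ^ 2 := by
    intro j
    rw [dk_inner_dot, dk_inner_dot, hbj]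
    simp only [Equiv.apply_symm_apply, u']
    rw [dotProduct_comm u, ← dk_symm_dot M hM, hH.mulVec_eigenvectorBasis j,
      smul_dotProduct, smul_eq_mul]
    ring
  have hmain : u ⬝ᵥ (M *ᵥ u) = ∑ j, hH.eigenvalues j * (⇑(b j) ⬝ᵥ u) ^ 2 := by
    rw [← Finset.sum_congr rfl (fun j _ => h2 j),
      b.sum_inner_mul_inner u' ((WithLp.equiv 2 (Fin d → ℝ)).symm (M *ᵥ u)), dk_inner_dot]
    simp [u']
  rw [hmain]
  calc ∑ j, hH.eigenvalues j * (⇑(b j) ⬝ᵥ u) ^ 2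
      ≤ ∑ j, μ * (⇑(b j) ⬝ᵥ u) ^ 2 :=
        Finset.sum_le_sum fun j _ => mul_le_mul_of_nonneg_right (hle j) (sq_nonneg _)
    _ = μ := by rw [← Finset.mul_sum, hsum1, mul_one]

lemma dk_specNorm_bound {d : ℕ} (A : Matrix (Fin d) (Fin d) ℝ) (x : Fin d → ℝ) (ε : ℝ)
    (hA : specNorm A ≤ ε) (hε : 0 ≤ ε) (hx : x ⬝ᵥ x ≤ 1) :
    (A *ᵥ x) ⬝ᵥ (A *ᵥ x) ≤ ε ^ 2 := by
  have hnorm : ∀ y : Fin d → ℝ,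
      ‖(WithLp.equiv 2 (Fin d → ℝ)).symm y‖ = Real.sqrt (y ⬝ᵥ y) := by
    intro y
    rw [EuclideanSpace.norm_eq]
    congr 1
    simp [dotProduct, sq_abs, sq]
  have h := (Matrix.toEuclideanCLM (𝕜 := ℝ) A).le_opNorm ((WithLp.equiv 2 (Fin d → ℝ)).symm x)
  rw [(show ∀ z, Matrix.toEuclideanCLM (𝕜 := ℝ) A ((WithLp.equiv 2 (Fin d → ℝ)).symm z) = (WithLp.equiv 2 (Fin d → ℝ)).symm (Matrix.toLin' A z) from fun _ => rfl), Matrix.toLin'_apply, hnorm, hnorm] at h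
  have hxs : Real.sqrt (x ⬝ᵥ x) ≤ 1 := by
    rw [show (1 : ℝ) = Real.sqrt 1 by simp]
    exact Real.sqrt_le_sqrt hx
  have h2 : Real.sqrt ((A *ᵥ x) ⬝ᵥ (A *ᵥ x)) ≤ ε := by
    calc Real.sqrt ((A *ᵥ x) ⬝ᵥ (A *ᵥ x)) ≤ specNorm A * Real.sqrt (x ⬝ᵥ x) := h
      _ ≤ ε * 1 := by
          apply mul_le_mul hA hxs (Real.sqrt_nonneg _) hε
      _ = ε := mul_one ε
  have := Real.sq_sqrt (dk_dot_self_nonneg (A *ᵥ x))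
  nlinarith [Real.sqrt_nonneg ((A *ᵥ x) ⬝ᵥ (A *ᵥ x))]

lemma dk_vecMulVec_mulVec {d : ℕ} (u w x : Fin d → ℝ) :
    vecMulVec u w *ᵥ x = (w ⬝ᵥ x) • u := by
  ext i
  simp [vecMulVec, mulVec, dotProduct, Finset.mul_sum, mul_comm, mul_assoc, mul_left_comm]

/-- Davis–Kahan sin-θ consequence: if M is symmetric with top unit eigenvector v and
top eigenvalue μ, u is a unit vector, and ‖M − λI − βuuᵀ‖ ≤ ε with β − ε > ε > 0, then
sin²(v, u) = 1 − (vᵀu)² ≤ 8ε²/(β − ε)². -/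
theorem davis_kahan_sin_sq {d : ℕ} (M : Matrix (Fin d) (Fin d) ℝ) (hM : M.IsSymm)
    (v u : Fin d → ℝ) (μ β ε lam : ℝ)
    (hv : vnorm v = 1) (hvev : M *ᵥ v = μ • v)
    (htop : ∀ (w : Fin d → ℝ) (ν : ℝ), w ≠ 0 → M *ᵥ w = ν • w → ν ≤ μ)
    (hu : vnorm u = 1) (hβ : 0 < β) (hε : 0 < ε) (hgap : ε < β - ε)
    (hpert : specNorm (M - lam • (1 : Matrix (Fin d) (Fin d) ℝ) - β • vecMulVec u u) ≤ ε) :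
    1 - (v ⬝ᵥ u) ^ 2 ≤ 8 * ε ^ 2 / (β - ε) ^ 2 := by
  have hvv : v ⬝ᵥ v = 1 := Real.sqrt_eq_one.mp hv
  have huu : u ⬝ᵥ u = 1 := Real.sqrt_eq_one.mp hu
  set E : Matrix (Fin d) (Fin d) ℝ := M - lam • (1 : Matrix (Fin d) (Fin d) ℝ) - β • vecMulVec u u
    with hE
  set c : ℝ := u ⬝ᵥ v with hc
  set s : ℝ := μ - lam with hs
  have hEmul : ∀ x : Fin d → ℝ, E *ᵥ x = M *ᵥ x - lam • x - (β * (u ⬝ᵥ x)) • u := by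
    intro x
    rw [hE, sub_mulVec, sub_mulVec, smul_mulVec, smul_mulVec, one_mulVec,
      dk_vecMulVec_mulVec, smul_smul]
  have he : E *ᵥ v = s • v - (β * c) • u := by
    rw [hEmul, hvev, hs, sub_smul]
  have heu : E *ᵥ u = M *ᵥ u - lam • u - β • u := by
    rw [hEmul, huu, mul_one]
  -- dot products
  have he_dot : (E *ᵥ v) ⬝ᵥ (E *ᵥ v) = s^2 - 2*s*β*c^2 + β^2*c^2 := by
    rw [he]
    simp only [sub_dotProduct, dotProduct_sub, smul_dotProduct, dotProduct_smul, smul_eq_mul,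
      hvv, huu, dotProduct_comm v u, ← hc]
    ring
  have hue : u ⬝ᵥ (E *ᵥ v) = s * c - β * c := by
    rw [he]
    simp only [dotProduct_sub, dotProduct_smul, smul_eq_mul, huu, ← hc]
    ring
  have hEv : (E *ᵥ v) ⬝ᵥ (E *ᵥ v) ≤ ε ^ 2 :=
    dk_specNorm_bound E v ε hpert hε.le (le_of_eq hvv)
  have hEu : (E *ᵥ u) ⬝ᵥ (E *ᵥ u) ≤ ε ^ 2 :=
    dk_specNorm_bound E u ε hpert hε.le (le_of_eq huu)
  -- lower bound on s
  have hray : u ⬝ᵥ (M *ᵥ u) ≤ μ := dk_rayleigh_le M hM μ htop u huu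
  have hMu : u ⬝ᵥ (M *ᵥ u) = lam + β + u ⬝ᵥ (E *ᵥ u) := by
    rw [heu]
    simp only [dotProduct_sub, dotProduct_smul, smul_eq_mul, huu]
    ring
  have hcsEu : (u ⬝ᵥ (E *ᵥ u)) ^ 2 ≤ ε ^ 2 := by
    have := dk_cs u (E *ᵥ u)
    nlinarith
  have hsge : β - ε ≤ s := by
    have : -ε ≤ u ⬝ᵥ (E *ᵥ u) := by nlinarith
    rw [hs]; linarith [hMu ▸ hray]
  -- main inequality
  have hc2 : c ^ 2 ≤ 1 := by
    have := dk_cs u v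
    nlinarith
  have hkey : s ^ 2 * (1 - c ^ 2) ≤ ε ^ 2 := by
    nlinarith [sq_nonneg (s * c - β * c), he_dot, hEv]
  have hβε : 0 < β - ε := lt_trans hε hgap
  have hvu : v ⬝ᵥ u = c := dotProduct_comm v u
  rw [hvu, le_div_iff₀ (by positivity)]
  nlinarith [sq_nonneg s, mul_le_mul_of_nonneg_right (mul_self_le_mul_self hβε.le hsge)
    (by linarith : (0:ℝ) ≤ 1 - c ^ 2)]
end

section
/- For symmetric positive definite Σ̂ and PSD Σ_p with ‖Σ̂^{−1/2} Σ_c Σ̂^{−1/2} − I‖_F ≤ δ and ‖Σ_c^{−1/2} Σ_p Σ_c^{−1/2}‖ ≤ ξ, the whitened poison covariance satisfies ‖Σ̂^{−1/2} Σ_p Σ̂^{−1/2}‖ ≤ ξ(1 + δ). -/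
open Matrix
lemma specNorm_le_frobNorm {d : ℕ} (A : Matrix (Fin d) (Fin d) ℝ) :
    specNorm A ≤ frobNorm A := by
  refine ContinuousLinearMap.opNorm_le_bound _ (Real.sqrt_nonneg _) fun x => ?_
  set y : Fin d → ℝ := WithLp.equiv 2 _ x with hy
  have hx : x = (WithLp.equiv 2 _).symm y := rfl
  rw [hx, WithLp.equiv_symm_apply, Matrix.toEuclideanCLM_toLp, EuclideanSpace.norm_eq,
    EuclideanSpace.norm_eq]
  simp only [PiLp.toLp_apply, Real.norm_eq_abs, sq_abs]
  have key : ∑ i, (A *ᵥ y) i ^ 2 ≤ (∑ i, ∑ j, A i j ^ 2) * ∑ j, y j ^ 2 := by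
    rw [Finset.sum_mul]
    refine Finset.sum_le_sum fun i _ => ?_
    simpa [Matrix.mulVec, dotProduct] using
      Finset.sum_mul_sq_le_sq_mul_sq Finset.univ (fun j => A i j) y
  calc Real.sqrt (∑ i, (A *ᵥ y) i ^ 2)
      ≤ Real.sqrt ((∑ i, ∑ j, A i j ^ 2) * ∑ j, y j ^ 2) := Real.sqrt_le_sqrt key
    _ = frobNorm A * Real.sqrt (∑ j, y j ^ 2) := by
        rw [Real.sqrt_mul (by positivity)]; rfl

set_option maxHeartbeats 1000000 in
set_option synthInstance.maxHeartbeats 400000 in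
/-- Whitened poison covariance bound: with W = Ŝ^{-1/2} (W posdef, W·W = Ŝ⁻¹) and
V = S_c^{1/2} (V posdef, V·V = S_c), if ‖WS_cW − I‖_F ≤ δ and
‖V⁻¹S_pV⁻¹‖ ≤ ξ, then ‖WS_pW‖ ≤ ξ(1 + δ). -/
theorem whitened_poison_covariance_bound {d : ℕ}
    (Sc Shat Sp W V : Matrix (Fin d) (Fin d) ℝ)
    (hSc : Sc.PosDef) (hShat : Shat.PosDef) (hSp : Sp.PosSemidef)
    (hW : W.PosDef) (hWsq : W * W = Shat⁻¹)
    (hV : V.PosDef) (hVsq : V * V = Sc)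
    (δ ξ : ℝ)
    (hwhiten : frobNorm (W * Sc * W - 1) ≤ δ)
    (hpoison : specNorm (V⁻¹ * Sp * V⁻¹) ≤ ξ) :
    specNorm (W * Sp * W) ≤ ξ * (1 + δ) := by
  set φ := Matrix.toEuclideanCLM (𝕜 := ℝ) (n := Fin d) with hφ
  have hdet : IsUnit V.det := hV.det_pos.ne'.isUnit
  have hVV : V * V⁻¹ = 1 := Matrix.mul_nonsing_inv V hdet
  have hVV' : V⁻¹ * V = 1 := Matrix.nonsing_inv_mul V hdet
  have hdecomp : W * Sp * W = (W * V) * (V⁻¹ * Sp * V⁻¹) * (V * W) := by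
    have h : (W * V) * (V⁻¹ * Sp * V⁻¹) * (V * W)
        = W * (V * V⁻¹) * (Sp * (V⁻¹ * V)) * W := by noncomm_ring
    rw [h, hVV, hVV', Matrix.mul_one, Matrix.mul_one]
  have hWh : Wᴴ = W := hW.isHermitian
  have hVh : Vᴴ = V := hV.isHermitian
  have hstar : φ (V * W) = star (φ (W * V)) := by
    rw [← map_star φ (W * V)]
    congr 1
    rw [Matrix.star_eq_conjTranspose, Matrix.conjTranspose_mul, hWh, hVh]
  have hsq : ‖φ (W * V)‖ * ‖φ (W * V)‖ = specNorm (W * Sc * W) := by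
    rw [← CStarRing.norm_self_mul_star (x := φ (W * V)), ← hstar, ← _root_.map_mul]
    have h : (W * V) * (V * W) = W * Sc * W := by rw [← hVsq]; noncomm_ring
    rw [h]; rfl
  have hδ0 : (0:ℝ) ≤ δ := le_trans (Real.sqrt_nonneg _) hwhiten
  have hξ0 : (0:ℝ) ≤ ξ := le_trans (norm_nonneg _) hpoison
  have hone : ‖φ 1‖ ≤ 1 := by
    rw [_root_.map_one]
    calc ‖(1 : EuclideanSpace ℝ (Fin d) →L[ℝ] EuclideanSpace ℝ (Fin d))‖
        = ‖ContinuousLinearMap.id ℝ (EuclideanSpace ℝ (Fin d))‖ := rfl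
      _ ≤ 1 := ContinuousLinearMap.norm_id_le
  have hWScW : specNorm (W * Sc * W) ≤ 1 + δ := by
    have h1 : W * Sc * W = (W * Sc * W - 1) + 1 := (sub_add_cancel _ _).symm
    calc specNorm (W * Sc * W) = ‖φ ((W * Sc * W - 1) + 1)‖ := by rw [← h1]; rfl
      _ ≤ ‖φ (W * Sc * W - 1)‖ + ‖φ 1‖ := by rw [_root_.map_add]; exact norm_add_le _ _
      _ ≤ δ + 1 := add_le_add (le_trans (specNorm_le_frobNorm _) hwhiten) hone
      _ = 1 + δ := by ring
  have key : specNorm (W * Sp * W)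
      ≤ ‖φ (W * V)‖ * ‖φ (V⁻¹ * Sp * V⁻¹)‖ * ‖φ (V * W)‖ := by
    show ‖φ (W * Sp * W)‖ ≤ _
    rw [hdecomp, _root_.map_mul, _root_.map_mul]
    exact le_trans (norm_mul_le _ _)
      (mul_le_mul_of_nonneg_right (norm_mul_le _ _) (norm_nonneg _))
  have hre : ‖φ (W * V)‖ * ‖φ (V⁻¹ * Sp * V⁻¹)‖ * ‖φ (V * W)‖
      = ‖φ (V⁻¹ * Sp * V⁻¹)‖ * (‖φ (W * V)‖ * ‖φ (W * V)‖) := by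
    have hb : ‖star (φ (W * V))‖ = ‖φ (W * V)‖ := by
      rw [ContinuousLinearMap.star_eq_adjoint]
      exact ContinuousLinearMap.adjoint.norm_map _
    rw [hstar, hb]; ring
  refine le_trans key (le_trans (le_of_eq hre) ?_)
  exact mul_le_mul hpoison (hsq.le.trans hWScW) (mul_self_nonneg _) hξ0
end
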